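/- arXiv:2404.17512 — 2 statements merged into one kernel-verified Lean document; each statement's English description precedes it below -/
import Mathlib

section
/- Evolution of the trace of the MDE solution along the characteristic flow. Let N ≥ 1, let 𝒜₀ ∈ ℂ^{N×N}, and set 𝒜_t := e^{-t/2}𝒜₀ for t in an interval [0,T). Let η : [0,T) → (0,∞) and M : [0,T) → ℂ^{2N×2N} be differentiable with the following properties: for each t, M_t is invertible, has positive definite imaginary part Im M_t = (M_t − M_t*)/(2i), and solves the matrix Dyson equation −M_t^{-1} = −H_{𝒜_t} + iη_t·I + ⟨M_t⟩·I; and η_t satisfies the characteristic ODE dη_t/dt = −η_t/2 − ⟨Im M_t⟩. Then for every t ∈ [0,T): d⟨M_t⟩/dt = ⟨M_t⟩/2. -/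
open MeasureTheory ProbabilityTheory Matrix Polynomial
open scoped ComplexOrder NNReal ENNReal

noncomputable section

/-- The Hermitization `[[0, B], [Bᴴ, 0]]` of an `N × N` complex matrix `B`. -/
def hermitize {N : ℕ} (B : Matrix (Fin N) (Fin N) ℂ) :
    Matrix (Fin N ⊕ Fin N) (Fin N ⊕ Fin N) ℂ :=
  Matrix.fromBlocks 0 B Bᴴ 0

/-- Normalized trace `⟨M⟩ = d⁻¹ Tr M`. -/
def ntrace {ι : Type} [Fintype ι] (M : Matrix ι ι ℂ) : ℂ :=
  M.trace / (Fintype.card ι : ℂ)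

/-- `|B|² = Bᴴ B`. -/
def absSq {N : ℕ} (B : Matrix (Fin N) (Fin N) ℂ) : Matrix (Fin N) (Fin N) ℂ :=
  Bᴴ * B

/-- The (matrix) imaginary part `Im M = (M - Mᴴ)/(2i)`. -/
def imPart {ι : Type} [Fintype ι] (M : Matrix ι ι ℂ) : Matrix ι ι ℂ :=
  (2 * Complex.I)⁻¹ • (M - Mᴴ)

/-- The `ℓ² → ℓ²` operator norm of a matrix. -/
def opNorm {ι : Type} [Fintype ι] [DecidableEq ι] (M : Matrix ι ι ℂ) : ℝ :=
  ‖LinearMap.toContinuousLinearMap (Matrix.toEuclideanLin M)‖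

/-- `M` is a solution of the matrix Dyson equation
`-M⁻¹ = -H_𝒜 + ẑ·I + ⟨M⟩·I` with positive definite imaginary part. -/
def IsMDESolution {N : ℕ} (𝒜 : Matrix (Fin N) (Fin N) ℂ) (zhat : ℂ)
    (M : Matrix (Fin N ⊕ Fin N) (Fin N ⊕ Fin N) ℂ) : Prop :=
  IsUnit M.det ∧ (imPart M).PosDef ∧
    M⁻¹ = hermitize 𝒜 - zhat • (1 : Matrix (Fin N ⊕ Fin N) (Fin N ⊕ Fin N) ℂ) - ntrace M • 1

/-- A choice of solution of the matrix Dyson equation. -/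
def mdeSol {N : ℕ} (𝒜 : Matrix (Fin N) (Fin N) ℂ) (zhat : ℂ) :
    Matrix (Fin N ⊕ Fin N) (Fin N ⊕ Fin N) ℂ :=
  Classical.epsilon fun M => IsMDESolution 𝒜 zhat M

/-- Partial derivative in the real direction. -/
def pdx (F : ℂ → ℝ) (z : ℂ) : ℝ := deriv (fun s : ℝ => F (z + (s : ℂ))) 0

/-- Partial derivative in the imaginary direction. -/
def pdy (F : ℂ → ℝ) (z : ℂ) : ℝ := deriv (fun s : ℝ => F (z + (s : ℂ) * Complex.I)) 0

/-- The Laplacian `Δ = ∂²/∂x² + ∂²/∂y²` on `ℂ ≅ ℝ²`. -/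
def cLap (F : ℂ → ℝ) (z : ℂ) : ℝ := pdx (pdx F) z + pdy (pdy F) z

/-- Partial derivative in the real direction, complex-valued version. -/
def pdxC (F : ℂ → ℂ) (z : ℂ) : ℂ := deriv (fun s : ℝ => F (z + (s : ℂ))) 0

/-- Partial derivative in the imaginary direction, complex-valued version. -/
def pdyC (F : ℂ → ℂ) (z : ℂ) : ℂ := deriv (fun s : ℝ => F (z + (s : ℂ) * Complex.I)) 0

/-- The Laplacian on `ℂ`, complex-valued version. -/
def cLapC (F : ℂ → ℂ) (z : ℂ) : ℂ := pdxC (pdxC F) z + pdyC (pdyC F) z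

/-- Wirtinger derivative `∂_z = (∂_x - i ∂_y)/2`. -/
def wirtDz (F : ℂ → ℂ) (z : ℂ) : ℂ := (pdxC F z - Complex.I * pdyC F z) / 2

/-- Wirtinger derivative `∂_z̄ = (∂_x + i ∂_y)/2`. -/
def wirtDzBar (F : ℂ → ℂ) (z : ℂ) : ℂ := (pdxC F z + Complex.I * pdyC F z) / 2

/-- Laplacian in the `j`-th coordinate of a function of `k` complex variables. -/
def lapCoord {k : ℕ} (j : Fin k) (F : (Fin k → ℂ) → ℂ) (w : Fin k → ℂ) : ℂ :=
  cLapC (fun z => F (Function.update w j z)) (w j)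

/-- The composition `Δ_{w₁} ⋯ Δ_{w_k}` of the coordinatewise Laplacians. -/
def multiLap {k : ℕ} (F : (Fin k → ℂ) → ℂ) : (Fin k → ℂ) → ℂ :=
  (List.finRange k).foldr (fun j G => lapCoord j G) F

/-- Resolvent of the Hermitization of `Y` at the spectral parameter `iη`. -/
def resolv {N : ℕ} (Y : Matrix (Fin N) (Fin N) ℂ) (η : ℝ) :
    Matrix (Fin N ⊕ Fin N) (Fin N ⊕ Fin N) ℂ :=
  (hermitize Y - ((η : ℂ) * Complex.I) • 1)⁻¹

/-- `X` is an IID random matrix (real if `isReal`, complex if not) with moment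
constants `cp`. -/
def IsIIDEntries {N : ℕ} {Ω : Type} [MeasurableSpace Ω] (μ : Measure Ω)
    (X : Ω → Matrix (Fin N) (Fin N) ℂ) (cp : ℕ → ℝ) (isReal : Bool) : Prop :=
  (∀ i j, Measurable fun ω => X ω i j) ∧
  iIndepFun (m := fun _ : Fin N × Fin N => (inferInstance : MeasurableSpace ℂ))
    (fun p : Fin N × Fin N => fun ω => X ω p.1 p.2) μ ∧
  (∀ i j, ∫ ω, X ω i j ∂μ = 0) ∧
  (∀ i j, ∫ ω, ‖X ω i j‖ ^ 2 ∂μ = 1 / N) ∧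
  (if isReal then ∀ ω i j, (X ω i j).im = 0
    else ∀ i j, ∫ ω, (X ω i j) ^ 2 ∂μ = 0) ∧
  (∀ p : ℕ, ∀ i j, ∫ ω, (Real.sqrt N * ‖X ω i j‖) ^ p ∂μ ≤ cp p)

/-- The law of a centered complex Gaussian whose real and imaginary parts are
independent real Gaussians of variance `v`. -/
def complexGaussian (v : ℝ≥0) : Measure ℂ :=
  Measure.map (fun p : ℝ × ℝ => (p.1 : ℂ) + (p.2 : ℂ) * Complex.I)
    ((gaussianReal 0 v).prod (gaussianReal 0 v))

/-- `X` is a Ginibre random matrix (real if `isReal`, complex if not). -/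
def IsGinibre {N : ℕ} {Ω : Type} [MeasurableSpace Ω] (μ : Measure Ω)
    (X : Ω → Matrix (Fin N) (Fin N) ℂ) (isReal : Bool) : Prop :=
  (∀ i j, Measurable fun ω => X ω i j) ∧
  iIndepFun (m := fun _ : Fin N × Fin N => (inferInstance : MeasurableSpace ℂ))
    (fun p : Fin N × Fin N => fun ω => X ω p.1 p.2) μ ∧
  (∀ i j, Measure.map (fun ω => X ω i j) μ =
    if isReal then Measure.map (fun x : ℝ => (x : ℂ)) (gaussianReal 0 (N : ℝ≥0)⁻¹)
    else complexGaussian ((2 * N : ℝ≥0))⁻¹)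

/-- The domain `D_C` of regular sharp-edge candidates. -/
def edgeDomain {N : ℕ} (A : Matrix (Fin N) (Fin N) ℂ) (C : ℝ) : Set ℂ :=
  {z | IsUnit (A - z • 1).det ∧ opNorm ((A - z • 1)⁻¹) < C ∧
    1 / C < (1 + ‖z‖) ^ 3 *
      ‖ntrace ((absSq (A - z • 1))⁻¹ * (absSq (A - z • 1))⁻¹ * (A - z • 1))‖}

/-- `I₃ = ⟨|B|⁻⁴ B*⟩`. -/
def I3m {N : ℕ} (B : Matrix (Fin N) (Fin N) ℂ) : ℂ :=
  ntrace ((absSq B)⁻¹ * (absSq B)⁻¹ * Bᴴ)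

/-- `I₄ = ⟨|B|⁻⁴⟩`. -/
def I4m {N : ℕ} (B : Matrix (Fin N) (Fin N) ℂ) : ℂ :=
  ntrace ((absSq B)⁻¹ * (absSq B)⁻¹)

/-- The rescaling parameter `γ₀ = -I₄^{-1/2} I₃`. -/
def gamma0 {N : ℕ} (B : Matrix (Fin N) (Fin N) ℂ) : ℂ :=
  -((((I4m B).re ^ (-(1/2 : ℝ)) : ℝ) : ℂ) * I3m B)

/-- The rescaling parameter `c₀ = I₄^{-1/4}`. -/
def cScale {N : ℕ} (B : Matrix (Fin N) (Fin N) ℂ) : ℝ :=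
  (I4m B).re ^ (-(1/4 : ℝ))

/-- The sharp-edge assumption (Assumption 2.5 of the paper) for the pair `(A, z₀)`
over the field `𝔽` (`isReal = true` for `𝔽 = ℝ`). -/
def SharpEdge {N : ℕ} (A : Matrix (Fin N) (Fin N) ℂ) (z₀ : ℂ)
    (C₁ C₂ 𝔠 : ℝ) (isReal : Bool) : Prop :=
  ntrace ((absSq (A - z₀ • 1))⁻¹) = 1 ∧ z₀ ∈ edgeDomain A C₁ ∧
  (if isReal then
    ((((N : ℝ) ^ (-(1/2 : ℝ) + 𝔠) ≤ |z₀.im|) →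
        ¬ Bornology.IsBounded
          (connectedComponentIn (edgeDomain A C₂ ∩ {z : ℂ | z.im ≠ 0}) z₀)) ∧
     ((|z₀.im| ≤ (N : ℝ) ^ (-(1/2 : ℝ) + 𝔠)) →
        ¬ Bornology.IsBounded
          (connectedComponentIn {x : ℝ | (x : ℂ) ∈ edgeDomain A C₂} z₀.re)))
  else
    ¬ Bornology.IsBounded (connectedComponentIn (edgeDomain A C₂) z₀))

/-- The eigenvalues of `B`, with algebraic multiplicity, as a list. -/
def eigList {N : ℕ} (B : Matrix (Fin N) (Fin N) ℂ) : List ℂ :=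
  (Matrix.charpoly B).roots.toList

/-- The sum of `F(φ(σ_{i₁}), …, φ(σ_{i_k}))` over all `k`-tuples of pairwise
distinct indices, where `σ₁, …, σ_N` are the eigenvalues of `B` with multiplicity. -/
def kPointSum {k N : ℕ} (F : (Fin k → ℂ) → ℂ) (φ : ℂ → ℂ)
    (B : Matrix (Fin N) (Fin N) ℂ) : ℂ :=
  ∑ f ∈ Finset.univ.filter (fun f : Fin k → Fin N => Function.Injective f),
    F fun j => φ ((eigList B).getD ((f j : ℕ)) 0)

/-- The regularized log-determinant statistic
`2N ∫_η^∞ Im[⟨(H_Y - iu)⁻¹⟩ - ⟨M_𝒜(iu)⟩] du`. -/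
def Lstat {N : ℕ} (Y 𝒜 : Matrix (Fin N) (Fin N) ℂ) (η : ℝ) : ℝ :=
  2 * N * ∫ u in Set.Ioi η,
    ((ntrace (resolv Y u)).im - (ntrace (mdeSol 𝒜 ((u : ℂ) * Complex.I))).im)

/-- The regularized smallest-singular-value statistic `⟨η(|Y|² + η²)⁻¹⟩`. -/
def Nstat {N : ℕ} (Y : Matrix (Fin N) (Fin N) ℂ) (η : ℝ) : ℝ :=
  (ntrace ((η : ℂ) • (absSq Y + ((η : ℂ) ^ 2) • 1)⁻¹)).re

/-- The path assumption (Assumption 4.4 of the paper) with constant `C₅`: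
a piecewise `C¹` path of deformations keeping the origin a sharp edge. -/
def PathAssumption {N : ℕ} (𝒜 : ℝ → Matrix (Fin N) (Fin N) ℂ)
    (A₀ : Matrix (Fin N) (Fin N) ℂ) (z₁ : ℂ) (C₅ : ℝ) : Prop :=
  (∀ i j, ContinuousOn (fun t => 𝒜 t i j) (Set.Icc 0 1)) ∧
  𝒜 0 = A₀ ∧ 𝒜 1 = (-z₁) • 1 ∧ ‖z₁‖ = 1 ∧
  (∀ t ∈ Set.Icc (0 : ℝ) 1, ntrace ((absSq (𝒜 t))⁻¹) = 1) ∧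
  ∃ T : Finset ℝ, ∀ t ∈ Set.Icc (0 : ℝ) 1, t ∉ T →
    (∀ i j, DifferentiableAt ℝ (fun s => 𝒜 s i j) t) ∧
    IsUnit (𝒜 t).det ∧
    opNorm (𝒜 t) ≤ C₅ ∧ opNorm ((𝒜 t)⁻¹) ≤ C₅ ∧
    C₅⁻¹ ≤ ‖ntrace (𝒜 t * ((absSq (𝒜 t))⁻¹ * (absSq (𝒜 t))⁻¹))‖ ∧
    ‖ntrace (𝒜 t * ((absSq (𝒜 t))⁻¹ * (absSq (𝒜 t))⁻¹))‖ ≤ C₅ ∧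
    opNorm (Matrix.of fun i j => deriv (fun s => 𝒜 s i j) t) ≤ C₅ * Real.log N

/-- `θ_t = 1 - ⟨(𝒜_t 𝒜_tᵀ)⁻¹⟩` along a path of deformations. -/
def thetaPath {N : ℕ} (𝒜 : ℝ → Matrix (Fin N) (Fin N) ℂ) (t : ℝ) : ℂ :=
  1 - ntrace ((𝒜 t * (𝒜 t)ᵀ)⁻¹)

/-- `ζ(w) = z₀ + γ₀⁻¹ N^{-1/2} w`. -/
def zetaPt {N : ℕ} (A : Matrix (Fin N) (Fin N) ℂ) (z₀ : ℂ) (w : ℂ) : ℂ :=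
  z₀ + (gamma0 (A - z₀ • 1))⁻¹ * ((((Real.sqrt (N : ℝ))⁻¹ : ℝ)) : ℂ) * w

/-- `η₁ = N^{-3/4-δ}`. -/
def eta1 (N : ℕ) (δ : ℝ) : ℝ := (N : ℝ) ^ (-(3/4 : ℝ) - δ)

/-- `η₀ = c₀⁻¹ η₁`. -/
def eta0 {N : ℕ} (A : Matrix (Fin N) (Fin N) ℂ) (z₀ : ℂ) (δ : ℝ) : ℝ :=
  (cScale (A - z₀ • 1))⁻¹ * eta1 N δ

/-- The regularized log-determinant `L₀(w)` for the realization `Xm` of the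
IID matrix, i.e. `Tr log(|A+Xm-ζ(w)|²+η₀²)` minus its deterministic counterpart,
written via the integral representation of the resolvent trace. -/
def L0stat {N : ℕ} (A Xm : Matrix (Fin N) (Fin N) ℂ) (z₀ : ℂ) (δ : ℝ) (w : ℂ) : ℝ :=
  Lstat (A + Xm - zetaPt A z₀ w • 1) (A - zetaPt A z₀ w • 1) (eta0 A z₀ δ)

/-- The regularized log-determinant `L₁^{Gin}(w)` for the realization `Xm`
of the Ginibre matrix. -/
def L1stat {N : ℕ} (Xm : Matrix (Fin N) (Fin N) ℂ) (z₁ : ℂ) (δ : ℝ) (w : ℂ) : ℝ :=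
  Lstat (Xm - (z₁ + z₁ * ((((Real.sqrt (N : ℝ))⁻¹ : ℝ)) : ℂ) * w) • 1)
    ((-(z₁ + z₁ * ((((Real.sqrt (N : ℝ))⁻¹ : ℝ)) : ℂ) * w)) • 1) (eta1 N δ)

/-- The regularized smallest-singular-value statistic
`N₀(w) = c₀⁻¹ ⟨η₀ (|A+Xm-ζ(w)|²+η₀²)⁻¹⟩`. -/
def N0stat {N : ℕ} (A Xm : Matrix (Fin N) (Fin N) ℂ) (z₀ : ℂ) (δ : ℝ) (w : ℂ) : ℝ :=
  (cScale (A - z₀ • 1))⁻¹ * Nstat (A + Xm - zetaPt A z₀ w • 1) (eta0 A z₀ δ)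

/-- The regularized smallest-singular-value statistic
`N₁^{Gin}(w) = ⟨η₁ (|Xm-z₁-z₁N^{-1/2}w|²+η₁²)⁻¹⟩`. -/
def N1stat {N : ℕ} (Xm : Matrix (Fin N) (Fin N) ℂ) (z₁ : ℂ) (δ : ℝ) (w : ℂ) : ℝ :=
  Nstat (Xm - (z₁ + z₁ * ((((Real.sqrt (N : ℝ))⁻¹ : ℝ)) : ℂ) * w) • 1) (eta1 N δ)


/- ### Auxiliary machinery for `mde_trace_flow` -/

section MdeTraceFlowAux

set_option linter.unusedSectionVars false

variable {ι : Type} [Fintype ι] [DecidableEq ι]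

lemma mde_trace_mul_ct_re (A : Matrix ι ι ℂ) :
    (A * Aᴴ).trace.re = ∑ p : ι × ι, ‖A p.1 p.2‖ ^ 2 := by
  rw [Fintype.sum_prod_type]
  simp only [Matrix.trace, Matrix.diag, Matrix.mul_apply, Matrix.conjTranspose_apply,
    Complex.star_def, Complex.mul_conj, Complex.re_sum, Complex.ofReal_re, Complex.sq_norm]

lemma mde_abs_trace_mul_le (A B : Matrix ι ι ℂ) :
    ‖(A * B).trace‖ ^ 2 ≤ (A * Aᴴ).trace.re * (B * Bᴴ).trace.re := by
  have h1 : (A * B).trace = ∑ p : ι × ι, A p.1 p.2 * B p.2 p.1 := by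
    rw [Fintype.sum_prod_type]; simp [Matrix.trace, Matrix.diag, Matrix.mul_apply]
  have h2 : ‖(A * B).trace‖
      ≤ ∑ p : ι × ι, ‖A p.1 p.2‖ * ‖B p.2 p.1‖ := by
    rw [h1]
    refine le_trans (norm_sum_le _ _) ?_
    simp [norm_mul, le_refl]
  have h3 := Finset.sum_mul_sq_le_sq_mul_sq Finset.univ
    (fun p : ι × ι => ‖A p.1 p.2‖) (fun p => ‖B p.2 p.1‖)
  have h4 : ∑ p : ι × ι, ‖B p.2 p.1‖ ^ 2
      = ∑ p : ι × ι, ‖B p.1 p.2‖ ^ 2 :=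
    Fintype.sum_equiv (Equiv.prodComm ι ι) _ _ (fun p => rfl)
  rw [mde_trace_mul_ct_re, mde_trace_mul_ct_re, ← h4]
  calc ‖(A * B).trace‖ ^ 2
      ≤ (∑ p : ι × ι, ‖A p.1 p.2‖ * ‖B p.2 p.1‖) ^ 2 := by
        apply pow_le_pow_left₀ (norm_nonneg _) h2
    _ ≤ _ := h3

lemma mde_trace_mul_ct (A : Matrix ι ι ℂ) :
    (A * Aᴴ).trace = (((A * Aᴴ).trace.re : ℝ) : ℂ) := by
  have : (A * Aᴴ).trace.im = 0 := by
    simp only [Matrix.trace, Matrix.diag, Matrix.mul_apply, Matrix.conjTranspose_apply,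
      Complex.star_def, Complex.mul_conj, Complex.im_sum, Complex.ofReal_im]
    simp
  exact (Complex.ext (by simp) (by simp [this])).symm

lemma mde_static_key [Nonempty ι] (H M E : Matrix ι ι ℂ) (hH : Hᴴ = H)
    (hE2 : E * E = 1) (hEH : E * H * E = -H) (hEc : Eᴴ = E)
    (η : ℝ) (hη : 0 < η) (hS : 0 < M.trace.im)
    (w : ℂ) (hw : w = (η : ℂ) * Complex.I + M.trace / (Fintype.card ι : ℂ))
    (hMG : M * (H - w • 1) = 1) (hGM : (H - w • 1) * M = 1) :
    M.trace.re = 0 ∧ ‖(M * M).trace‖ < (Fintype.card ι : ℝ) := by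
  set n : ℝ := (Fintype.card ι : ℝ) with hn
  have hn0 : 0 < n := by
    have := Fintype.card_pos (α := ι); positivity
  set S : ℂ := M.trace with hSdef
  set r : ℝ := (M * Mᴴ).trace.re with hr
  have hr0 : 0 ≤ r := by
    rw [hr, mde_trace_mul_ct_re]; positivity
  set cw : ℂ := starRingEnd ℂ w with hcw
  -- conjugated relations
  have hMG' : Mᴴ * (H - cw • 1) = 1 := by
    have h := congrArg Matrix.conjTranspose hGM
    simpa [Matrix.conjTranspose_mul, Matrix.conjTranspose_sub, hH,
      Matrix.conjTranspose_smul] using h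
  have hGM' : (H - cw • 1) * Mᴴ = 1 := by
    have h := congrArg Matrix.conjTranspose hMG
    simpa [Matrix.conjTranspose_mul, Matrix.conjTranspose_sub, hH,
      Matrix.conjTranspose_smul] using h
  -- resolvent-type identity
  have hker : ∀ (c d : ℂ) (X : Matrix ι ι ℂ), (H - c • 1) * X = 1 → M * (H - d • 1) = 1 →
      M - X = (d - c) • (M * X) := by
    intro c d X h1 h2
    have e1 : M * ((H - c • 1) * X) = M := by rw [h1, Matrix.mul_one]
    have e2 : (M * (H - d • 1)) * X = X := by rw [h2, Matrix.one_mul]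
    have e3 : (H - c • 1) - (H - d • 1) = (d - c) • (1 : Matrix ι ι ℂ) := by
      rw [sub_smul]; abel
    calc M - X = M * (H - c • 1) * X - M * (H - d • 1) * X := by
          rw [Matrix.mul_assoc M (H - c • 1) X, e1, e2]
      _ = M * ((H - c • 1) - (H - d • 1)) * X := by
          simp only [Matrix.mul_sub, Matrix.sub_mul]
      _ = M * ((d - c) • (1 : Matrix ι ι ℂ)) * X := by rw [e3]
      _ = (d - c) • (M * X) := by
          rw [Matrix.mul_smul, Matrix.mul_one, Matrix.smul_mul]
  have ward : M - Mᴴ = (w - cw) • (M * Mᴴ) := hker cw w Mᴴ hGM' hMG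
  have htr : S - starRingEnd ℂ S = (w - cw) * (M * Mᴴ).trace := by
    have := congrArg Matrix.trace ward
    simpa [Matrix.trace_sub, Matrix.trace_smul, Matrix.trace_conjTranspose, smul_eq_mul,
      hSdef] using this
  have hcast : ((Fintype.card ι : ℂ)) = ((n : ℝ) : ℂ) := by rw [hn]; push_cast; ring
  have hwim : w.im = η + S.im / n := by
    rw [hw, hcast]
    simp [Complex.add_im, Complex.div_ofReal_im]
  have hwre : w.re = S.re / n := by
    rw [hw, hcast]
    simp [Complex.add_re, Complex.div_ofReal_re]
  -- imaginary part identity: S.im = w.im * r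
  have him : S.im = w.im * r := by
    have h1 := congrArg Complex.im htr
    rw [Complex.sub_conj, mde_trace_mul_ct, Complex.sub_conj] at h1
    have h2 : 2 * S.im = 2 * w.im * (M * Mᴴ).trace.re := by
      simpa [Complex.mul_im, Complex.ofReal_re, Complex.ofReal_im] using h1
    rw [hr]; linarith
  have hwim0 : 0 < w.im := by rw [hwim]; positivity
  have hrn : r < n := by
    have h3 : S.im * n = (η * n + S.im) * r := by
      have h4 : S.im = (η + S.im / n) * r := by rw [← hwim]; exact him
      field_simp at h4
      linarith
    by_contra hc
    push_neg at hc
    have h4 : (η * n + S.im) * n ≤ (η * n + S.im) * r :=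
      mul_le_mul_of_nonneg_left hc (by positivity)
    have h5 : (η * n + S.im) * n ≤ S.im * n := by rw [h3]; exact h4
    nlinarith [mul_pos hη (mul_pos hn0 hn0)]
  refine ⟨?_, ?_⟩
  · -- chiral symmetry: real part vanishes
    by_contra hre
    set M₂ : Matrix ι ι ℂ := -(E * Mᴴ * E) with hM2
    have hEH1 : E * (H + cw • 1) = (-H + cw • 1) * E := by
      have h1 : E * H = -H * E := by
        have := congrArg (· * E) hEH
        simpa [Matrix.mul_assoc, hE2, Matrix.mul_one] using this
      rw [Matrix.mul_add, Matrix.add_mul, h1]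
      congr 1
      rw [Matrix.mul_smul, Matrix.mul_one, Matrix.smul_mul, Matrix.one_mul]
    have hnegsub : (-H + cw • (1 : Matrix ι ι ℂ)) = -(H - cw • 1) := by abel
    have hM2G : M₂ * (H + cw • 1) = 1 := by
      have e1 : E * (H + cw • 1) = -(H - cw • 1) * E := by rw [hEH1, hnegsub]
      calc M₂ * (H + cw • 1) = -(E * (Mᴴ * (E * (H + cw • 1)))) := by
            rw [hM2]; simp only [Matrix.neg_mul, Matrix.mul_assoc]
        _ = -(E * (Mᴴ * (-(H - cw • 1) * E))) := by rw [e1]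
        _ = E * (Mᴴ * ((H - cw • 1) * E)) := by
            simp only [Matrix.neg_mul, Matrix.mul_neg, neg_neg]
        _ = E * (1 * E) := by rw [← Matrix.mul_assoc Mᴴ, hMG']
        _ = 1 := by rw [Matrix.one_mul, hE2]
    have hGM2 : (H + cw • 1) * M₂ = 1 := by
      have h1 : (H + cw • 1) * E = E * -(H - cw • 1) := by
        have h0 := congrArg (fun X => E * X) hEH1
        simp only [← Matrix.mul_assoc, hE2, Matrix.one_mul] at h0
        calc (H + cw • 1) * E = (E * (-H + cw • 1) * E) * E := by rw [← h0]
          _ = E * (-H + cw • 1) * (E * E) := by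
              rw [Matrix.mul_assoc (E * (-H + cw • 1)) E E]
          _ = E * -(H - cw • 1) := by rw [hE2, Matrix.mul_one, hnegsub]
      calc (H + cw • 1) * M₂
          = -(((H + cw • 1) * E) * (Mᴴ * E)) := by
            rw [hM2]; simp only [Matrix.mul_neg, Matrix.mul_assoc]
        _ = -((E * -(H - cw • 1)) * (Mᴴ * E)) := by rw [h1]
        _ = E * ((H - cw • 1) * (Mᴴ * E)) := by
            simp only [Matrix.mul_neg, Matrix.neg_mul, neg_neg, Matrix.mul_assoc]
        _ = E * (1 * E) := by rw [← Matrix.mul_assoc (H - cw • 1), hGM']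
        _ = 1 := by rw [Matrix.one_mul, hE2]
    have h5 : (H - (-cw) • 1) * M₂ = 1 := by rw [neg_smul, sub_neg_eq_add]; exact hGM2
    have hres : M - M₂ = (w - -cw) • (M * M₂) := hker (-cw) w M₂ h5 hMG
    have htrM2 : M₂.trace = -(starRingEnd ℂ S) := by
      rw [hM2, Matrix.trace_neg, Matrix.trace_mul_cycle E Mᴴ E, hE2, Matrix.one_mul,
        Matrix.trace_conjTranspose]
      rfl
    have htr2 : S + starRingEnd ℂ S = (w + cw) * (M * M₂).trace := by
      have h6 := congrArg Matrix.trace hres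
      rw [Matrix.trace_sub, Matrix.trace_smul, htrM2, smul_eq_mul] at h6
      linear_combination h6
    have hSre : ((S.re : ℝ) : ℂ) ≠ 0 := by
      simpa using hre
    have hn0' : ((n : ℝ) : ℂ) ≠ 0 := by
      exact_mod_cast ne_of_gt hn0
    have hTr : (M * M₂).trace = ((n : ℝ) : ℂ) := by
      rw [Complex.add_conj] at htr2
      have hwsum : w + cw = ((2 * (S.re / n) : ℝ) : ℂ) := by
        rw [hcw, Complex.add_conj, hwre]
      rw [hwsum] at htr2
      have hne : ((2 * (S.re / n) : ℝ) : ℂ) ≠ 0 := by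
        push_cast
        exact mul_ne_zero two_ne_zero (div_ne_zero hSre hn0')
      apply mul_left_cancel₀ hne
      rw [← htr2]
      push_cast
      field_simp
    have hM2ct : (M₂ * M₂ᴴ).trace = (M * Mᴴ).trace := by
      have hM2H : M₂ᴴ = -(E * (M * E)) := by
        rw [hM2]
        simp only [Matrix.conjTranspose_neg, Matrix.conjTranspose_mul,
          Matrix.conjTranspose_conjTranspose, hEc, Matrix.mul_assoc]
      rw [hM2, hM2H]
      have : -(E * Mᴴ * E) * -(E * (M * E)) = E * (Mᴴ * (M * E)) := by
        calc -(E * Mᴴ * E) * -(E * (M * E)) = (E * Mᴴ) * ((E * E) * (M * E)) := by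
              simp only [Matrix.neg_mul, Matrix.mul_neg, neg_neg, Matrix.mul_assoc]
          _ = E * (Mᴴ * (M * E)) := by rw [hE2, Matrix.one_mul, Matrix.mul_assoc]
      rw [this, Matrix.trace_mul_comm, Matrix.mul_assoc Mᴴ (M * E) E,
        Matrix.mul_assoc M E E, hE2, Matrix.mul_one, Matrix.trace_mul_comm]
    have hcs := mde_abs_trace_mul_le M M₂
    rw [hTr] at hcs
    rw [hM2ct, ← hr] at hcs
    have : ‖((n : ℝ) : ℂ)‖ = n := by
      simp [Complex.norm_real, abs_of_pos hn0]
    rw [this] at hcs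
    nlinarith
  · -- bound on normalized trace of M²
    have hcs := mde_abs_trace_mul_le M M
    have h7 : ‖(M * M).trace‖ ^ 2 ≤ r ^ 2 := by
      calc ‖(M * M).trace‖ ^ 2 ≤ (M * Mᴴ).trace.re * (M * Mᴴ).trace.re := hcs
        _ = r ^ 2 := by rw [← hr]; ring
    have habs : ‖(M * M).trace‖ ≤ r := by
      nlinarith [norm_nonneg ((M * M).trace)]
    linarith

lemma mde_trace_im_pos [Nonempty ι] {M : Matrix ι ι ℂ}
    (h : (imPart M).PosDef) : 0 < M.trace.im := by
  have hdiag : ∀ i, 0 < (M i i).im := by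
    intro i
    have hx : (Pi.single i 1 : ι → ℂ) ≠ 0 := by
      intro hx
      have h0 := congrFun hx i
      simp at h0
    have h2 := h.dotProduct_mulVec_pos hx
    have heval : dotProduct (star (Pi.single i 1 : ι → ℂ))
        ((imPart M) *ᵥ (Pi.single i 1)) = imPart M i i := by
      simp [dotProduct, Matrix.mulVec, Pi.single_apply, apply_ite,
        Finset.sum_ite_eq, Finset.sum_ite_eq']
    rw [heval] at h2
    have hent : imPart M i i = (((M i i).im : ℝ) : ℂ) := by
      simp only [imPart, Matrix.smul_apply, Matrix.sub_apply, Matrix.conjTranspose_apply,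
        smul_eq_mul, Complex.star_def, Complex.sub_conj]
      rw [inv_mul_eq_div, div_eq_iff (mul_ne_zero two_ne_zero Complex.I_ne_zero)]
      push_cast
      ring
    rw [hent] at h2
    exact_mod_cast h2
  have htr : M.trace.im = ∑ i, (M i i).im := by
    simp [Matrix.trace, Matrix.diag, Complex.im_sum]
  rw [htr]
  exact Finset.sum_pos (fun i _ => hdiag i) Finset.univ_nonempty

lemma mde_hermitize_herm {N : ℕ} (B : Matrix (Fin N) (Fin N) ℂ) :
    (hermitize B)ᴴ = hermitize B := by
  simp [hermitize, Matrix.fromBlocks_conjTranspose]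

lemma mde_hermitize_smul {N : ℕ} (c : ℝ) (B : Matrix (Fin N) (Fin N) ℂ) :
    hermitize (((c : ℝ) : ℂ) • B) = ((c : ℝ) : ℂ) • hermitize B := by
  simp [hermitize, Matrix.conjTranspose_smul, Matrix.fromBlocks_smul,
    Complex.star_def, Complex.conj_ofReal]

/-- The chirality matrix `E = diag(1, -1)`. -/
def mdeE (N : ℕ) : Matrix (Fin N ⊕ Fin N) (Fin N ⊕ Fin N) ℂ :=
  Matrix.fromBlocks 1 0 0 (-1)

lemma mdeE_sq (N : ℕ) : mdeE N * mdeE N = 1 := by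
  simp [mdeE, Matrix.fromBlocks_multiply, Matrix.fromBlocks_one]

lemma mdeE_herm (N : ℕ) : (mdeE N)ᴴ = mdeE N := by
  simp [mdeE, Matrix.fromBlocks_conjTranspose]

lemma mdeE_conj {N : ℕ} (B : Matrix (Fin N) (Fin N) ℂ) :
    mdeE N * hermitize B * mdeE N = -(hermitize B) := by
  simp [mdeE, hermitize, Matrix.fromBlocks_multiply, Matrix.fromBlocks_neg]

end MdeTraceFlowAux

/-- **Evolution of the trace of the MDE solution along the characteristic flow.** -/
theorem mde_trace_flow (N : ℕ) (hN : 1 ≤ N) (T : ℝ)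
    (𝒜₀ : Matrix (Fin N) (Fin N) ℂ)
    (η : ℝ → ℝ) (M : ℝ → Matrix (Fin N ⊕ Fin N) (Fin N ⊕ Fin N) ℂ)
    (hMdiff : ∀ t ∈ Set.Ico (0 : ℝ) T, ∀ i j, DifferentiableAt ℝ (fun s => M s i j) t)
    (hηpos : ∀ t ∈ Set.Ico (0 : ℝ) T, 0 < η t)
    (hMDE : ∀ t ∈ Set.Ico (0 : ℝ) T,
      IsMDESolution (((Real.exp (-t/2) : ℝ) : ℂ) • 𝒜₀) ((η t : ℂ) * Complex.I) (M t))
    (hODE : ∀ t ∈ Set.Ico (0 : ℝ) T,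
      HasDerivAt η (-(η t)/2 - (ntrace (M t)).im) t) :
    ∀ t ∈ Set.Ico (0 : ℝ) T,
      HasDerivAt (fun s => ntrace (M s)) (ntrace (M t) / 2) t := by
  intro t ht
  obtain ⟨ht0, htT⟩ := ht
  haveI hne : Nonempty (Fin N ⊕ Fin N) := ⟨Sum.inl ⟨0, hN⟩⟩
  have hcard0 : (0 : ℝ) < (Fintype.card (Fin N ⊕ Fin N) : ℝ) := by
    exact_mod_cast Fintype.card_pos
  have hcardC : ((Fintype.card (Fin N ⊕ Fin N) : ℂ)) ≠ 0 := by
    exact_mod_cast Fintype.card_ne_zero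
  -- entrywise derivative of M at t
  set Md := Matrix.of (fun i j : Fin N ⊕ Fin N => deriv (fun s => M s i j) t) with hMddef
  have hM't : ∀ i j, HasDerivAt (fun s => M s i j) (Md i j) t := by
    intro i j
    simpa [hMddef] using (hMdiff t ⟨ht0, htT⟩ i j).hasDerivAt
  have htrM : HasDerivAt (fun s => (M s).trace) Md.trace t := by
    simp only [Matrix.trace, Matrix.diag]
    exact HasDerivAt.fun_sum (fun i _ => hM't i i)
  have hmder : HasDerivAt (fun s => ntrace (M s)) (ntrace Md) t := by
    simp only [ntrace]
    exact htrM.div_const _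
  set vm := ntrace Md with hvmdef
  obtain ⟨hu, hposdef, heq⟩ := hMDE t ⟨ht0, htT⟩
  set w : ℂ := (η t : ℂ) * Complex.I + ntrace (M t) with hwdef
  set Gt : Matrix (Fin N ⊕ Fin N) (Fin N ⊕ Fin N) ℂ :=
    ((Real.exp (-t/2) : ℝ) : ℂ) • hermitize 𝒜₀ - w • 1 with hGtdef
  have hGfun : ∀ s ∈ Set.Ico (0:ℝ) T,
      M s * (((Real.exp (-s/2) : ℝ) : ℂ) • hermitize 𝒜₀
          - ((η s : ℂ) * Complex.I + ntrace (M s)) • 1) = 1 ∧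
      (((Real.exp (-s/2) : ℝ) : ℂ) • hermitize 𝒜₀
          - ((η s : ℂ) * Complex.I + ntrace (M s)) • 1) * M s = 1 := by
    intro s hs
    obtain ⟨hu', _, heq'⟩ := hMDE s hs
    have hform : (M s)⁻¹ = ((Real.exp (-s/2) : ℝ) : ℂ) • hermitize 𝒜₀
        - ((η s : ℂ) * Complex.I + ntrace (M s)) • 1 := by
      rw [heq', mde_hermitize_smul, sub_sub, ← add_smul]
    exact ⟨by rw [← hform]; exact Matrix.mul_nonsing_inv _ hu',
      by rw [← hform]; exact Matrix.nonsing_inv_mul _ hu'⟩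
  have hMGt : M t * Gt = 1 := by
    rw [hGtdef]; exact (hGfun t ⟨ht0, htT⟩).1
  have hGtM : Gt * M t = 1 := by
    rw [hGtdef]; exact (hGfun t ⟨ht0, htT⟩).2
  -- static facts about M t
  have hHh : (((Real.exp (-t/2) : ℝ) : ℂ) • hermitize 𝒜₀)ᴴ
      = ((Real.exp (-t/2) : ℝ) : ℂ) • hermitize 𝒜₀ := by
    rw [Matrix.conjTranspose_smul, mde_hermitize_herm]
    congr 1
    simp only [Complex.star_def, Complex.conj_ofReal]
  have hEHs : mdeE N * (((Real.exp (-t/2) : ℝ) : ℂ) • hermitize 𝒜₀) * mdeE N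
      = -(((Real.exp (-t/2) : ℝ) : ℂ) • hermitize 𝒜₀) := by
    rw [Matrix.mul_smul, Matrix.smul_mul, mdeE_conj, smul_neg]
  have hstat := mde_static_key (((Real.exp (-t/2) : ℝ) : ℂ) • hermitize 𝒜₀) (M t)
    (mdeE N) hHh (mdeE_sq N) hEHs (mdeE_herm N) (η t) (hηpos t ⟨ht0, htT⟩)
    (mde_trace_im_pos hposdef) w (by rw [hwdef, ntrace]) (hGtdef ▸ hMGt) (hGtdef ▸ hGtM)
  obtain ⟨hre, habs⟩ := hstat
  -- derivative data
  have hηt := hODE t ⟨ht0, htT⟩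
  set η't : ℝ := -(η t)/2 - (ntrace (M t)).im with hη'tdef
  set c' : ℂ := ((Real.exp (-t/2) * (-1/2) : ℝ) : ℂ) with hc'def
  set w' : ℂ := (η't : ℂ) * Complex.I + vm with hw'def
  set G' : Matrix (Fin N ⊕ Fin N) (Fin N ⊕ Fin N) ℂ :=
    c' • hermitize 𝒜₀ - w' • 1 with hG'def
  have hexp : HasDerivAt (fun s : ℝ => Real.exp (-s/2)) (Real.exp (-t/2) * (-1/2)) t := by
    have h1 : HasDerivAt (fun s : ℝ => -s/2) (-1/2 : ℝ) t := by
      simpa using (hasDerivAt_id t).neg.div_const 2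
    simpa using h1.exp
  have hGder : ∀ k j, HasDerivAt
      (fun s => ((Real.exp (-s/2) : ℝ) : ℂ) * hermitize 𝒜₀ k j
        - ((η s : ℂ) * Complex.I + ntrace (M s)) * (1 : Matrix (Fin N ⊕ Fin N) (Fin N ⊕ Fin N) ℂ) k j)
      (c' * hermitize 𝒜₀ k j - w' * (1 : Matrix (Fin N ⊕ Fin N) (Fin N ⊕ Fin N) ℂ) k j) t := by
    intro k j
    exact ((hexp.ofReal_comp).mul_const _).sub
      ((((hηt.ofReal_comp).mul_const Complex.I).add hmder).mul_const _)
  have hud : UniqueDiffWithinAt ℝ (Set.Ici t) t := uniqueDiffOn_Ici t t Set.self_mem_Ici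
  have hmat : Md * Gt + M t * G' = 0 := by
    ext i j
    have hprod : HasDerivAt
        (fun s => ∑ k, M s i k * (((Real.exp (-s/2) : ℝ) : ℂ) * hermitize 𝒜₀ k j
          - ((η s : ℂ) * Complex.I + ntrace (M s)) * (1 : Matrix (Fin N ⊕ Fin N) (Fin N ⊕ Fin N) ℂ) k j))
        (∑ k, (Md i k * Gt k j + M t i k * G' k j)) t := by
      have hval : ∀ k : Fin N ⊕ Fin N, Md i k * Gt k j + M t i k * G' k j
          = Md i k * (((Real.exp (-t/2) : ℝ) : ℂ) * hermitize 𝒜₀ k j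
              - w * (1 : Matrix (Fin N ⊕ Fin N) (Fin N ⊕ Fin N) ℂ) k j)
            + M t i k * (c' * hermitize 𝒜₀ k j
              - w' * (1 : Matrix (Fin N ⊕ Fin N) (Fin N ⊕ Fin N) ℂ) k j) := by
        intro k
        rw [hGtdef, hG'def]
        simp [Matrix.sub_apply, Matrix.smul_apply, smul_eq_mul]
      rw [Finset.sum_congr rfl (fun k _ => hval k)]
      exact HasDerivAt.fun_sum (fun k _ => (hM't i k).mul (hGder k j))
    have hzero : HasDerivWithinAt
        (fun s => ∑ k, M s i k * (((Real.exp (-s/2) : ℝ) : ℂ) * hermitize 𝒜₀ k j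
          - ((η s : ℂ) * Complex.I + ntrace (M s)) * (1 : Matrix (Fin N ⊕ Fin N) (Fin N ⊕ Fin N) ℂ) k j))
        0 (Set.Ici t) t := by
      have hmem : Set.Ico t T ∈ nhdsWithin t (Set.Ici t) :=
        Ico_mem_nhdsGE htT
      refine (hasDerivWithinAt_const t _
        ((1 : Matrix (Fin N ⊕ Fin N) (Fin N ⊕ Fin N) ℂ) i j)).congr_of_eventuallyEq ?_ ?_
      · filter_upwards [hmem] with s hs
        have hs' : s ∈ Set.Ico (0:ℝ) T := ⟨le_trans ht0 hs.1, hs.2⟩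
        have h1 := congrFun (congrFun (hGfun s hs').1 i) j
        simpa [Matrix.mul_apply, Matrix.sub_apply, Matrix.smul_apply, smul_eq_mul] using h1
      · have h1 := congrFun (congrFun (hGfun t ⟨ht0, htT⟩).1 i) j
        simpa [Matrix.mul_apply, Matrix.sub_apply, Matrix.smul_apply, smul_eq_mul] using h1
    have h0 : (∑ k, (Md i k * Gt k j + M t i k * G' k j)) = 0 :=
      (hprod.hasDerivWithinAt.derivWithin hud).symm.trans (hzero.derivWithin hud)
    rw [Matrix.add_apply, Matrix.mul_apply, Matrix.mul_apply, Matrix.zero_apply,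
      ← Finset.sum_add_distrib]
    exact h0
  -- solve for Md
  have h8 := congrArg (fun X => X * M t) hmat
  simp only [Matrix.add_mul, Matrix.zero_mul, Matrix.mul_assoc] at h8
  rw [hGtM, Matrix.mul_one] at h8
  have hMdeq : Md = -(M t * (G' * M t)) := eq_neg_of_add_eq_zero_left h8
  -- trace computation
  have hG'dec : G' = (-(1:ℂ)/2) • Gt
      + (-(w/2) - w') • (1 : Matrix (Fin N ⊕ Fin N) (Fin N ⊕ Fin N) ℂ) := by
    rw [hG'def, hGtdef]
    have hc : c' = (-(1:ℂ)/2) * ((Real.exp (-t/2) : ℝ) : ℂ) := by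
      rw [hc'def]; push_cast; ring
    rw [hc]
    module
  have htrMd : Md.trace = (M t).trace/2 + (w/2 + w') * ((M t * M t)).trace := by
    rw [hMdeq, Matrix.trace_neg]
    have e1 : (M t * (G' * M t)).trace = ((M t * M t) * G').trace := by
      rw [Matrix.trace_mul_comm (M t) (G' * M t), Matrix.mul_assoc, Matrix.trace_mul_comm]
    rw [e1, hG'dec, Matrix.mul_add, Matrix.mul_smul, Matrix.mul_smul, Matrix.mul_one,
      Matrix.mul_assoc, hMGt, Matrix.mul_one]
    rw [Matrix.trace_add, Matrix.trace_smul, Matrix.trace_smul]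
    simp only [smul_eq_mul]
    ring
  -- scalar endgame
  have hre0 : (ntrace (M t)).re = 0 := by
    rw [ntrace]
    have : ((Fintype.card (Fin N ⊕ Fin N) : ℂ))
        = (((Fintype.card (Fin N ⊕ Fin N) : ℝ)) : ℂ) := by push_cast; ring
    rw [this, Complex.div_ofReal_re, hre, zero_div]
  have hQlt : ‖ntrace (M t * M t)‖ < 1 := by
    rw [ntrace, norm_div, Complex.norm_natCast]
    exact (div_lt_one hcard0).mpr habs
  have hQne : ntrace (M t * M t) ≠ 1 := by
    intro h
    rw [h] at hQlt
    simp at hQlt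
  have hscal : vm = ntrace (M t)/2 + (w/2 + w') * ntrace (M t * M t) := by
    rw [hvmdef, ntrace, htrMd, ntrace, ntrace]
    field_simp
  have him : ((ntrace (M t)).im : ℂ) * Complex.I = ntrace (M t) := by
    have h1 := Complex.re_add_im (ntrace (M t))
    rw [hre0] at h1
    simpa using h1
  have hrel : w/2 + w' = vm - ntrace (M t)/2 := by
    rw [hwdef, hw'def, hη'tdef]
    push_cast
    linear_combination -him
  have hend : vm - ntrace (M t)/2 = (vm - ntrace (M t)/2) * ntrace (M t * M t) := by
    linear_combination hscal + ntrace (M t * M t) * hrel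
  have hvm2 : vm = ntrace (M t)/2 := by
    by_contra hne2
    have h10 : vm - ntrace (M t)/2 ≠ 0 := sub_ne_zero.mpr hne2
    have h11 : (vm - ntrace (M t)/2) * 1 = (vm - ntrace (M t)/2) * ntrace (M t * M t) := by
      rw [mul_one]; exact hend
    exact hQne (mul_left_cancel₀ h10 h11).symm
  rw [← hvm2]
  exact hmder
end
end

section
/- Deterministic resolvent monotonicity inequality on the imaginary axis. Let H ∈ ℂ^{n×n} be Hermitian, let 0 < η₁ ≤ η₀, write G(iη) := (H − iη·I)^{-1} and Im G(iη) := (G(iη) − G(iη)*)/(2i). Then for all vectors u, y ∈ ℂⁿ: | u*( G(iη₁) − G(iη₀) ) y | ≤ (η₀/(2η₁)) · ( u* Im G(iη₀) u + y* Im G(iη₀) y ). -/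
open MeasureTheory ProbabilityTheory Matrix Polynomial
open scoped ComplexOrder NNReal ENNReal

noncomputable section

namespace RMhelp

variable {n : ℕ}

lemma sandwich_mul (U : Matrix (Fin n) (Fin n) ℂ) (hU2 : Uᴴ * U = 1) (d e : Fin n → ℂ) :
    (U * Matrix.diagonal d * Uᴴ) * (U * Matrix.diagonal e * Uᴴ)
      = U * Matrix.diagonal (fun k => d k * e k) * Uᴴ := by
  have h : (Matrix.diagonal d * Uᴴ) * (U * Matrix.diagonal e) = Matrix.diagonal fun k => d k * e k := by
    rw [mul_assoc, ← mul_assoc Uᴴ, hU2, one_mul, Matrix.diagonal_mul_diagonal]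
  calc (U * Matrix.diagonal d * Uᴴ) * (U * Matrix.diagonal e * Uᴴ)
      = U * ((Matrix.diagonal d * Uᴴ) * (U * Matrix.diagonal e)) * Uᴴ := by
        simp only [mul_assoc]
    _ = U * Matrix.diagonal (fun k => d k * e k) * Uᴴ := by rw [h]

lemma sandwich_qform (U : Matrix (Fin n) (Fin n) ℂ) (d : Fin n → ℂ) (x y : Fin n → ℂ) :
    star x ⬝ᵥ ((U * Matrix.diagonal d * Uᴴ) *ᵥ y)
      = ∑ k, (starRingEnd ℂ) ((Uᴴ *ᵥ x) k) * (d k * (Uᴴ *ᵥ y) k) := by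
  have h1 : star x ᵥ* U = star (Uᴴ *ᵥ x) := by
    rw [Matrix.star_mulVec, Matrix.conjTranspose_conjTranspose]
  rw [← Matrix.mulVec_mulVec, ← Matrix.mulVec_mulVec, Matrix.dotProduct_mulVec, h1]
  simp [dotProduct, Matrix.mulVec_diagonal]

lemma sandwich_imPart (U : Matrix (Fin n) (Fin n) ℂ) (d : Fin n → ℂ) :
    (2 * Complex.I)⁻¹ • ((U * Matrix.diagonal d * Uᴴ) - (U * Matrix.diagonal d * Uᴴ)ᴴ) =
      U * Matrix.diagonal (fun k => (2*Complex.I)⁻¹ * (d k - (starRingEnd ℂ) (d k))) * Uᴴ := by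
  have h : (U * Matrix.diagonal d * Uᴴ)ᴴ = U * Matrix.diagonal (star d) * Uᴴ := by
    rw [Matrix.conjTranspose_mul, Matrix.conjTranspose_mul, Matrix.conjTranspose_conjTranspose,
      Matrix.diagonal_conjTranspose, mul_assoc]
  rw [h, ← Matrix.sub_mul, ← Matrix.mul_sub, Matrix.diagonal_sub, ← Matrix.smul_mul,
    ← Matrix.mul_smul, ← Matrix.diagonal_smul]
  rfl

lemma scalar_ineq (l e0 e1 A B s0 s1 : ℝ) (h1 : 0 < e1) (h2 : e1 ≤ e0)
    (hA : 0 ≤ A) (hB : 0 ≤ B) (hs0 : 0 < s0) (hs1 : 0 < s1)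
    (hs0sq : s0^2 = l^2 + e0^2) (hs1sq : s1^2 = l^2 + e1^2) :
    (e0 - e1)/(s1*s0)*(A*B) ≤ e0/(2*e1) * (e0/s0^2 * A^2 + e0/s0^2 * B^2) := by
  have h0 : 0 < e0 := h1.trans_le h2
  have hss : e1 * s0 ≤ e0 * s1 := by
    have hsq : (e1*s0)^2 ≤ (e0*s1)^2 := by
      have he : e1^2 ≤ e0^2 := by nlinarith
      calc (e1*s0)^2 = e1^2 * (l^2 + e0^2) := by rw [mul_pow, hs0sq]
        _ ≤ e0^2 * (l^2 + e1^2) := by nlinarith [sq_nonneg l]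
        _ = (e0*s1)^2 := by rw [mul_pow, hs1sq]
    have h1' : 0 ≤ e1 * s0 := by positivity
    have h2' : 0 ≤ e0 * s1 := by positivity
    nlinarith [hsq]
  have hAB : A*B ≤ (A^2+B^2)/2 := by nlinarith [sq_nonneg (A-B)]
  have key : (e0 - e1)/(s1*s0) ≤ e0^2/(e1*s0^2) := by
    rw [div_le_div_iff₀ (by positivity) (by positivity)]
    nlinarith [mul_le_mul_of_nonneg_left hss (mul_nonneg (sub_nonneg.2 h2) hs0.le),
      mul_pos (mul_pos h1 h0) (mul_pos hs1 hs0)]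
  calc (e0-e1)/(s1*s0)*(A*B) ≤ e0^2/(e1*s0^2) * ((A^2+B^2)/2) :=
        mul_le_mul key hAB (mul_nonneg hA hB) (by positivity)
    _ = e0/(2*e1) * (e0/s0^2 * A^2 + e0/s0^2 * B^2) := by
        field_simp

end RMhelp

/-- **Deterministic resolvent monotonicity inequality on the imaginary axis.** -/
theorem resolvent_monotonicity (n : ℕ) (H : Matrix (Fin n) (Fin n) ℂ)
    (hH : H.IsHermitian) (η₀ η₁ : ℝ) (h1 : 0 < η₁) (h2 : η₁ ≤ η₀)
    (u y : Fin n → ℂ) :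
    ‖star u ⬝ᵥ (((H - ((η₁ : ℂ) * Complex.I) • 1)⁻¹
        - (H - ((η₀ : ℂ) * Complex.I) • 1)⁻¹) *ᵥ y)‖
      ≤ η₀ / (2 * η₁) *
        ((star u ⬝ᵥ (imPart ((H - ((η₀ : ℂ) * Complex.I) • 1)⁻¹) *ᵥ u)).re
          + (star y ⬝ᵥ (imPart ((H - ((η₀ : ℂ) * Complex.I) • 1)⁻¹) *ᵥ y)).re) := by
  classical
  set U : Matrix (Fin n) (Fin n) ℂ := (hH.eigenvectorUnitary : Matrix (Fin n) (Fin n) ℂ) with hUdef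
  set E : Fin n → ℝ := hH.eigenvalues with hEdef
  have hU1 : U * Uᴴ = 1 := by
    simpa [Matrix.star_eq_conjTranspose] using
      (Matrix.mem_unitaryGroup_iff.mp hH.eigenvectorUnitary.2)
  have hU2 : Uᴴ * U = 1 := by
    simpa [Matrix.star_eq_conjTranspose] using
      (Matrix.mem_unitaryGroup_iff'.mp hH.eigenvectorUnitary.2)
  have h0 : 0 < η₀ := h1.trans_le h2
  set D : ℝ → Fin n → ℂ := fun η k => ((E k : ℂ) - (η : ℂ) * Complex.I) with hDdef
  have hconst : ∀ c : ℂ, U * Matrix.diagonal (fun _ : Fin n => c) * Uᴴ = c • 1 := by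
    intro c
    rw [← Matrix.smul_one_eq_diagonal, Matrix.mul_smul, Matrix.smul_mul, mul_one, hU1]
  have hspec : H = U * Matrix.diagonal (fun k => (E k : ℂ)) * Uᴴ := by
    conv_lhs => rw [hH.spectral_theorem]
    rfl
  have hfact : ∀ η : ℝ, H - ((η : ℂ) * Complex.I) • 1 = U * Matrix.diagonal (D η) * Uᴴ := by
    intro η
    conv_lhs => rw [hspec]
    rw [← hconst ((η : ℂ) * Complex.I), ← Matrix.sub_mul, ← Matrix.mul_sub,
      Matrix.diagonal_sub]
  have hne : ∀ η : ℝ, 0 < η → ∀ k, D η k ≠ 0 := by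
    intro η hη k h
    have : (D η k).im = 0 := by rw [h]; simp
    simp [hDdef] at this
    exact hη.ne' this
  have hinv : ∀ η : ℝ, 0 < η →
      (H - ((η : ℂ) * Complex.I) • 1)⁻¹ = U * Matrix.diagonal (fun k => (D η k)⁻¹) * Uᴴ := by
    intro η hη
    rw [hfact η]
    apply Matrix.inv_eq_right_inv
    rw [RMhelp.sandwich_mul U hU2]
    have : (fun k => D η k * (D η k)⁻¹) = fun _ : Fin n => (1 : ℂ) :=
      funext fun k => mul_inv_cancel₀ (hne η hη k)
    rw [this, ← Matrix.smul_one_eq_diagonal, one_smul, mul_one, hU1]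
  have him0 : ∀ k, (D η₀ k).im = -η₀ := by intro k; simp [hDdef]
  have hre0 : ∀ k, (D η₀ k).re = E k := by intro k; simp [hDdef]
  have himabs : ∀ k, ((D η₀ k)⁻¹).im = η₀ / Complex.normSq (D η₀ k) := by
    intro k
    rw [Complex.inv_im, him0 k, neg_neg]
  have hfun : (fun k => (2*Complex.I)⁻¹ * ((D η₀ k)⁻¹ - (starRingEnd ℂ) ((D η₀ k)⁻¹)))
      = fun k => ((η₀ / Complex.normSq (D η₀ k) : ℝ) : ℂ) := by
    funext k
    have h2I : (2 : ℂ) * Complex.I ≠ 0 := by simp [Complex.I_ne_zero]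
    have : (2 * Complex.I)⁻¹ * ((D η₀ k)⁻¹ - (starRingEnd ℂ) ((D η₀ k)⁻¹))
        = (((D η₀ k)⁻¹).im : ℂ) := by
      rw [Complex.sub_conj]
      field_simp
      push_cast; ring
    rw [this, himabs k]
  have hIm : imPart ((H - ((η₀ : ℂ) * Complex.I) • 1)⁻¹)
      = U * Matrix.diagonal (fun k => ((η₀ / Complex.normSq (D η₀ k) : ℝ) : ℂ)) * Uᴴ := by
    rw [imPart, hinv η₀ h0, RMhelp.sandwich_imPart U, hfun]
  set a : Fin n → ℂ := Uᴴ *ᵥ u with hadef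
  set b : Fin n → ℂ := Uᴴ *ᵥ y with hbdef
  have hdiff : (H - ((η₁ : ℂ) * Complex.I) • 1)⁻¹ - (H - ((η₀ : ℂ) * Complex.I) • 1)⁻¹
      = U * Matrix.diagonal (fun k => (D η₁ k)⁻¹ - (D η₀ k)⁻¹) * Uᴴ := by
    rw [hinv η₁ h1, hinv η₀ h0, ← Matrix.sub_mul, ← Matrix.mul_sub, Matrix.diagonal_sub]
  rw [hdiff, hIm, RMhelp.sandwich_qform, RMhelp.sandwich_qform, RMhelp.sandwich_qform,
    ← hadef, ← hbdef, Complex.re_sum, Complex.re_sum]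
  have hre : ∀ (r : ℝ) (w : ℂ), ((starRingEnd ℂ) w * ((r : ℂ) * w)).re = r * Complex.normSq w := by
    intro r w
    simp [Complex.mul_re, Complex.mul_im, Complex.normSq_apply]
    ring
  have hsuma : ∑ k, ((starRingEnd ℂ) (a k) * (((η₀ / Complex.normSq (D η₀ k) : ℝ) : ℂ) * a k)).re
      = ∑ k, η₀ / Complex.normSq (D η₀ k) * ‖a k‖^2 :=
    Finset.sum_congr rfl fun k _ => by rw [hre, Complex.sq_norm]
  have hsumb : ∑ k, ((starRingEnd ℂ) (b k) * (((η₀ / Complex.normSq (D η₀ k) : ℝ) : ℂ) * b k)).re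
      = ∑ k, η₀ / Complex.normSq (D η₀ k) * ‖b k‖^2 :=
    Finset.sum_congr rfl fun k _ => by rw [hre, Complex.sq_norm]
  rw [hsuma, hsumb]
  calc ‖∑ k, (starRingEnd ℂ) (a k) * (((D η₁ k)⁻¹ - (D η₀ k)⁻¹) * b k)‖
      ≤ ∑ k, ‖(starRingEnd ℂ) (a k) * (((D η₁ k)⁻¹ - (D η₀ k)⁻¹) * b k)‖ :=
        norm_sum_le _ _
    _ ≤ ∑ k, η₀ / (2 * η₁) * (η₀ / Complex.normSq (D η₀ k) * ‖a k‖^2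
          + η₀ / Complex.normSq (D η₀ k) * ‖b k‖^2) := by
        apply Finset.sum_le_sum
        intro k _
        have hs0 : 0 < ‖D η₀ k‖ := by
          exact norm_pos_iff.mpr (hne η₀ h0 k)
        have hs1 : 0 < ‖D η₁ k‖ := by
          exact norm_pos_iff.mpr (hne η₁ h1 k)
        have hs0sq : ‖D η₀ k‖^2 = (E k)^2 + η₀^2 := by
          rw [Complex.sq_norm, Complex.normSq_apply, hre0 k, him0 k]
          ring
        have hs1sq : ‖D η₁ k‖^2 = (E k)^2 + η₁^2 := by
          rw [Complex.sq_norm, Complex.normSq_apply]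
          have : (D η₁ k).re = E k := by simp [hDdef]
          rw [this]
          have : (D η₁ k).im = -η₁ := by simp [hDdef]
          rw [this]
          ring
        have habsdiff : ‖(D η₁ k)⁻¹ - (D η₀ k)⁻¹‖
            = (η₀ - η₁) / (‖D η₁ k‖ * ‖D η₀ k‖) := by
          rw [inv_sub_inv (hne η₁ h1 k) (hne η₀ h0 k)]
          have hnum : D η₀ k - D η₁ k = ((η₁ - η₀ : ℝ) : ℂ) * Complex.I := by
            simp only [hDdef]
            push_cast
            ring
          rw [hnum, norm_div, norm_mul (((η₁ - η₀ : ℝ) : ℂ)) Complex.I,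
            norm_mul (D η₁ k) (D η₀ k), Complex.norm_I, Complex.norm_real, Real.norm_eq_abs, mul_one,
            abs_of_nonpos (by linarith : η₁ - η₀ ≤ 0), neg_sub]
        have hnsq0 : Complex.normSq (D η₀ k) = ‖D η₀ k‖^2 :=
          (Complex.sq_norm _).symm
        have hlhs : ‖(starRingEnd ℂ) (a k) * (((D η₁ k)⁻¹ - (D η₀ k)⁻¹) * b k)‖
            = (η₀ - η₁) / (‖D η₁ k‖ * ‖D η₀ k‖)
              * (‖a k‖ * ‖b k‖) := by
          rw [norm_mul, norm_mul, Complex.norm_conj, habsdiff]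
          ring
        rw [hlhs, hnsq0]
        exact RMhelp.scalar_ineq (E k) η₀ η₁ _ _ _ _ h1 h2 (norm_nonneg _)
          (norm_nonneg _) hs0 hs1 hs0sq hs1sq
    _ = η₀ / (2 * η₁) *
        ((∑ k, η₀ / Complex.normSq (D η₀ k) * ‖a k‖^2)
          + ∑ k, η₀ / Complex.normSq (D η₀ k) * ‖b k‖^2) := by
        rw [← Finset.mul_sum, Finset.sum_add_distrib]
end
end
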